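/- arXiv:math/0008184 — 4 statements merged into one kernel-verified Lean document; each statement's English description precedes it below -/
import Mathlib

section
/- For nonzero complex numbers a, b, x, y, s, t with st = ay and s t^{-1} = ax, writing σ(t) = t - t^{-1}, one has σ(bt)σ(a^2)(σ(ay)σ(b s^{-1}) + σ(ax)σ(bs)) = σ(b t^{-1})σ(a^2)(σ(ax)σ(b s^{-1}) + σ(ay)σ(bs)). -/
noncomputable def sig (t : ℂ) : ℂ := t - t⁻¹

theorem reflection_equation_identity (a b x y s t : ℂ)
    (ha : a ≠ 0) (hb : b ≠ 0) (hx : x ≠ 0) (hy : y ≠ 0) (hs : s ≠ 0) (ht : t ≠ 0)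
    (h1 : s * t = a * y) (h2 : s * t⁻¹ = a * x) :
    sig (b * t) * sig (a ^ 2) * (sig (a * y) * sig (b * s⁻¹) + sig (a * x) * sig (b * s)) =
      sig (b * t⁻¹) * sig (a ^ 2) *
        (sig (a * x) * sig (b * s⁻¹) + sig (a * y) * sig (b * s)) := by
  unfold sig
  rw [← h1, ← h2]
  field_simp
  ring
end

section
/- Let x_1,...,x_n and y_1,...,y_n be complex numbers such that x_i + y_j ≠ 0 for all i, j. Then the determinant of the n×n matrix with (i,j) entry 1/(x_i + y_j) equals (∏_{i<j} (x_j - x_i)(y_j - y_i)) / (∏_{i,j} (x_i + y_j)). -/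
/-!
Eliminating the first row and column of the Cauchy matrix with the pivot `1 / (x₀ + y₀)` leaves
the Schur complement with entries
`1 / (xᵢ + yⱼ) - (x₀ + y₀) / ((xᵢ + y₀) (x₀ + yⱼ))
  = (xᵢ - x₀) (yⱼ - y₀) / ((xᵢ + y₀) (xᵢ + yⱼ) (x₀ + yⱼ))`,
which is again a Cauchy matrix, in the variables `x₁, …, xₙ` and `y₁, …, yₙ`, scaled on both sides
by diagonal matrices. Induction on `n` then produces the product formula factor by factor.
-/

open Finset

theorem Finset.prod_filter_fst_lt_snd {ι M : Type*} [CommMonoid M] [Fintype ι] [LinearOrder ι]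
    [LocallyFiniteOrderTop ι] (f : ι → ι → M) :
    ∏ p ∈ (univ ×ˢ univ).filter (fun p : ι × ι => p.1 < p.2), f p.1 p.2 =
      ∏ i, ∏ j ∈ Ioi i, f i j := by
  rw [prod_filter, prod_product]
  refine prod_congr rfl fun i _ => ?_
  rw [← prod_filter, filter_lt_eq_Ioi]

namespace Matrix

variable {K : Type*} [Field K]

theorem det_succ_eq_mul_det_schurComplement {n : ℕ} (A : Matrix (Fin (n + 1)) (Fin (n + 1)) K)
    (hA : A 0 0 ≠ 0) :
    A.det =
      A 0 0 * (of fun i j : Fin n => A i.succ j.succ - A i.succ 0 * A 0 j.succ / A 0 0).det := by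
  let c : Fin (n + 1) → K := Fin.cases 0 fun i => A i.succ 0 / A 0 0
  let B : Matrix (Fin (n + 1)) (Fin (n + 1)) K := of fun i j => A i j - c i * A 0 j
  have hB0 : ∀ j, B 0 j = A 0 j := by simp [B, c]
  have hdet : A.det = B.det :=
    det_eq_of_forall_row_eq_smul_add_const c 0 rfl fun i j => by simp [hB0, B]
  rw [hdet, det_succ_column_zero, Fin.sum_univ_succ, Fintype.sum_eq_zero, add_zero]
  · simp only [Fin.val_zero, pow_zero, one_mul, hB0, Fin.succAbove_zero]
    congr 2
    ext i j
    simp [B, c, mul_div_right_comm]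
  · intro i
    simp [B, c, hA]

end Matrix

variable {K : Type*} [Field K]

def cauchyMatrix {m n : Type*} (x : m → K) (y : n → K) : Matrix m n K :=
  Matrix.of fun i j => 1 / (x i + y j)

theorem cauchyMatrix_schurComplement {n : ℕ} (x y : Fin (n + 1) → K)
    (h : ∀ i j, x i + y j ≠ 0) :
    (Matrix.of fun i j : Fin n => cauchyMatrix x y i.succ j.succ -
        cauchyMatrix x y i.succ 0 * cauchyMatrix x y 0 j.succ / cauchyMatrix x y 0 0) =
      Matrix.diagonal (fun i => (x i.succ - x 0) / (x i.succ + y 0)) *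
        cauchyMatrix (x ∘ Fin.succ) (y ∘ Fin.succ) *
        Matrix.diagonal (fun j => (y j.succ - y 0) / (x 0 + y j.succ)) := by
  ext i j
  simp only [cauchyMatrix, Matrix.of_apply, Matrix.diagonal_mul, Matrix.mul_diagonal, Function.comp]
  field_simp [h]
  ring

theorem det_cauchyMatrix {n : ℕ} (x y : Fin n → K) (h : ∀ i j, x i + y j ≠ 0) :
    (cauchyMatrix x y).det =
      (∏ i, ∏ j ∈ Ioi i, (x j - x i) * (y j - y i)) / ∏ i, ∏ j, (x i + y j) := by
  induction n with
  | zero => simp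
  | succ n ih =>
    rw [Matrix.det_succ_eq_mul_det_schurComplement _ (one_div_ne_zero (h 0 0)),
      cauchyMatrix_schurComplement x y h, Matrix.det_mul, Matrix.det_mul, Matrix.det_diagonal,
      Matrix.det_diagonal, ih (x ∘ Fin.succ) (y ∘ Fin.succ) fun i j => h _ _]
    simp only [Fin.prod_univ_succ, Fin.prod_Ioi_zero, Fin.prod_Ioi_succ, cauchyMatrix,
      Matrix.of_apply, Function.comp, prod_mul_distrib, prod_div_distrib]
    field_simp [h, prod_ne_zero_iff]

theorem cauchy_double_alternant (n : ℕ) (x y : Fin n → ℂ)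
    (h : ∀ i j, x i + y j ≠ 0) :
    Matrix.det (Matrix.of fun i j : Fin n => 1 / (x i + y j)) =
      (∏ p ∈ (univ ×ˢ univ).filter (fun p : Fin n × Fin n => p.1 < p.2),
          (x p.2 - x p.1) * (y p.2 - y p.1)) /
        ∏ i : Fin n, ∏ j : Fin n, (x i + y j) := by
  rw [prod_filter_fst_lt_snd fun i j => (x j - x i) * (y j - y i)]
  exact det_cauchyMatrix x y h
end

section
/- For every positive integer n, the rational number (1!·4!·7!···(3n-2)!)/(n!·(n+1)!···(2n-1)!) equals (-3)^{n(n-1)/2} · ∏_{i=1}^{n} ∏_{j=1}^{n} (3(j-i)+1)/(j-i+n). -/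
/-!
Write the double product as `∏ i, ∏ j, f (j - i)` with `f d = (3d + 1) / (d + n)` and split the
`n × n` array into the hooks `max i j = k`, `k < n`; the `k`-th hook contributes
`∏_{|m| ≤ k} f m`. Up to the sign `(-3)^k`, its numerator is `(3k + 1)! / k!` and its
denominator is `(n + k)! / (n - 1 - k)!`, and the factorials `k!` and `(n - 1 - k)!` cancel
in the product over `k < n`.
-/

open Finset Nat

/-- The product of `f` over the integers `-k, …, k`. -/
def hookProd {M : Type*} [CommMonoid M] (f : ℤ → M) (k : ℕ) : M :=
  (∏ m ∈ range k, f (-(m + 1))) * ∏ m ∈ range (k + 1), f m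

section CommMonoid

variable {M : Type*} [CommMonoid M]

theorem hookProd_succ (f : ℤ → M) (k : ℕ) :
    hookProd f (k + 1) = f (-(k + 1)) * hookProd f k * f (k + 1) := by
  simp only [hookProd, prod_range_succ _ (k + 1), prod_range_succ _ k]
  push_cast
  ac_rfl

/-- Peeling off the first row and column of the Toeplitz array `f (j - i)` leaves a translate of
the smaller array. -/
theorem prod_range_prod_range_sub_eq_prod_hookProd (f : ℤ → M) (n : ℕ) :
    ∏ i ∈ range n, ∏ j ∈ range n, f ((j : ℤ) - i) = ∏ k ∈ range n, hookProd f k := by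
  induction n with
  | zero => simp
  | succ n ih =>
    rw [prod_range_succ (hookProd f) n, ← ih, hookProd, prod_range_succ' (fun m : ℕ ↦ f m)]
    simp only [prod_range_succ' _ n, prod_mul_distrib, Nat.cast_add, Nat.cast_one,
      add_sub_add_right_eq_sub, Nat.cast_zero, sub_zero, zero_sub, neg_zero]
    ac_rfl

end CommMonoid

theorem hookProd_div {G : Type*} [DivisionCommMonoid G] (f g : ℤ → G) (k : ℕ) :
    hookProd (fun m ↦ f m / g m) k = hookProd f k / hookProd g k := by
  simp only [hookProd, prod_div_distrib]
  exact div_mul_div_comm _ _ _ _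

section CommRing

variable {R : Type*} [CommRing R]

/-- Sorting `1, …, 3k+1` by residue mod 3: the multiples of 3 give `3^k k!`, and the others are
`±(3m+1)` for `-k ≤ m ≤ k`, with a minus sign exactly when `m < 0`. -/
theorem factorial_three_mul_add_one_eq (k : ℕ) :
    ((3 * k + 1)! : R) = (-3) ^ k * k ! * hookProd (fun m : ℤ ↦ 3 * (m : R) + 1) k := by
  induction k with
  | zero => simp [hookProd]
  | succ k ih =>
    rw [hookProd_succ, show 3 * (k + 1) + 1 = 3 * k + 1 + 1 + 1 + 1 by ring, factorial_succ,
      factorial_succ, factorial_succ, factorial_succ k]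
    push_cast [ih]
    ring

theorem factorial_add_eq (n k : ℕ) (hk : k < n) :
    ((n + k)! : R) = (n - 1 - k)! * hookProd (fun m : ℤ ↦ (m : R) + n) k := by
  obtain ⟨l, rfl⟩ := Nat.exists_eq_add_of_lt hk
  rw [show k + l + 1 - 1 - k = l by omega]
  clear hk
  induction k generalizing l with
  | zero => simp [hookProd, factorial_succ, mul_comm]
  | succ k ih =>
    rw [show k + 1 + l + 1 = k + (l + 1) + 1 by ring, hookProd_succ,
      show k + (l + 1) + 1 + (k + 1) = k + (l + 1) + 1 + k + 1 by ring, factorial_succ,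
      Nat.cast_mul, ih, factorial_succ l]
    push_cast
    ring

end CommRing

theorem prod_Icc_one_eq_prod_range {M : Type*} [CommMonoid M] (f : ℕ → M) (n : ℕ) :
    ∏ i ∈ Icc 1 n, f i = ∏ i ∈ range n, f (i + 1) := by
  rw [range_eq_Ico, prod_Ico_add', zero_add, Ico_add_one_right_eq_Icc]

theorem asm_formulas_agree_general (n : ℕ) :
    (∏ k ∈ Finset.range n, ((Nat.factorial (3 * k + 1) : ℚ))) /
      (∏ k ∈ Finset.range n, ((Nat.factorial (n + k) : ℚ))) =
    (-3 : ℚ) ^ (n * (n - 1) / 2) *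
      ∏ i ∈ Finset.Icc 1 n, ∏ j ∈ Finset.Icc 1 n,
        (3 * ((j : ℚ) - (i : ℚ)) + 1) / ((j : ℚ) - (i : ℚ) + (n : ℚ)) := by
  set f : ℤ → ℚ := fun m ↦ (3 * m + 1) / (m + n)
  have hsign : (-3 : ℚ) ^ (n * (n - 1) / 2) = ∏ k ∈ range n, (-3) ^ k := by
    rw [prod_pow_eq_pow_sum, sum_range_id]
  have harray : ∏ i ∈ Icc 1 n, ∏ j ∈ Icc 1 n,
      (3 * ((j : ℚ) - (i : ℚ)) + 1) / ((j : ℚ) - (i : ℚ) + (n : ℚ)) =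
      ∏ i ∈ range n, ∏ j ∈ range n, f ((j : ℤ) - i) := by
    simp only [prod_Icc_one_eq_prod_range, f]
    push_cast
    simp only [add_sub_add_right_eq_sub]
  have hhook : ∀ k ∈ range n, (-3) ^ k * hookProd f k =
      (3 * k + 1)! * (n - 1 - k)! / (k ! * (n + k)! : ℚ) := by
    intro k hk
    have hden := factorial_add_eq (R := ℚ) n k (mem_range.mp hk)
    have hden0 : hookProd (fun m : ℤ ↦ (m : ℚ) + n) k ≠ 0 := by
      refine right_ne_zero_of_mul (a := ((n - 1 - k)! : ℚ)) ?_
      rw [← hden]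
      positivity
    rw [hookProd_div, factorial_three_mul_add_one_eq, hden]
    field_simp
  rw [harray, prod_range_prod_range_sub_eq_prod_hookProd, hsign, ← prod_mul_distrib,
    prod_congr rfl hhook, prod_div_distrib, prod_mul_distrib, prod_mul_distrib,
    prod_range_reflect (fun k ↦ (k ! : ℚ))]
  field_simp

theorem asm_formulas_agree (n : ℕ) (hn : 1 ≤ n) :
    (∏ k ∈ Finset.range n, ((Nat.factorial (3 * k + 1) : ℚ))) /
      (∏ k ∈ Finset.range n, ((Nat.factorial (n + k) : ℚ))) =
    (-3 : ℚ) ^ (n * (n - 1) / 2) *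
      ∏ i ∈ Finset.Icc 1 n, ∏ j ∈ Finset.Icc 1 n,
        (3 * ((j : ℚ) - (i : ℚ)) + 1) / ((j : ℚ) - (i : ℚ) + (n : ℚ)) :=
  asm_formulas_agree_general n
end

section
/- For every positive integer n, the number of n×n alternating-sign matrices with exactly k entries equal to -1, weighted by 2^k and summed over all such matrices, equals 2^{n(n-1)/2}. In symbols: Σ_{A an n×n ASM} 2^{(number of -1 entries of A)} = 2^{n(n-1)/2}. -/
/-!
Cutting an `n × n` alternating-sign matrix after its first `u` rows, the columns whose partial
sum is `1` form a set `C u`; the sets `∅ = C 0, …, C n = univ` are the rows of a monotone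
triangle (`C u` interlaces `C (u + 1)`), and the `-1` entries of row `u` sit at `C u \ C (u + 1)`.

The weighted count of monotone triangles is computed row by row. For a row `T` of size `m + 1`
with Vandermonde product `V T`, the sum of `2 ^ #(S \ T) * V S` over the rows `S` interlacing `T`
is `2 ^ m / m! * V T`: by multilinearity of the determinant it is one determinant whose entries
are sums of `x ^ q` over the gaps of `T`, with weight `1` at the ends and `2` inside, and these
are differences of polynomials of degree `q + 1` with leading coefficient `2 / (q + 1)`.
Starting from `V univ = ∏_{j < n} j!` this gives `∏_{j < n} 2 ^ j = 2 ^ (n (n - 1) / 2)`.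
-/

open Finset

/-- `A` is an alternating-sign matrix: entries in `{-1,0,1}`, every row and
column sums to `1`, and every prefix sum along a row or a column is `0` or `1`
(equivalently, the nonzero entries of each row and column alternate in sign,
beginning and ending with `1`). -/
def IsASM {n : ℕ} (A : Matrix (Fin n) (Fin n) ℤ) : Prop :=
  (∀ i j, A i j = 1 ∨ A i j = 0 ∨ A i j = -1) ∧
  (∀ i, ∑ j, A i j = 1) ∧ (∀ j, ∑ i, A i j = 1) ∧
  (∀ i k, (∑ j ∈ univ.filter (· ≤ k), A i j) = 0 ∨ (∑ j ∈ univ.filter (· ≤ k), A i j) = 1) ∧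
  (∀ j k, (∑ i ∈ univ.filter (· ≤ k), A i j) = 0 ∨ (∑ i ∈ univ.filter (· ≤ k), A i j) = 1)

/-- The number of `-1` entries of `A`. -/
def negCount {n : ℕ} (A : Matrix (Fin n) (Fin n) ℤ) : ℕ :=
  (univ.filter (fun p : Fin n × Fin n => A p.1 p.2 = -1)).card

open Matrix Polynomial

section Determinants

variable {R : Type*} [CommRing R]

theorem det_eq_det_of_succ_row_sub {m : ℕ} (M : Matrix (Fin (m + 1)) (Fin (m + 1)) R)
    (hM : ∀ i, M i 0 = 1) :
    M.det = (of fun p q : Fin m => M p.succ q.succ - M p.castSucc q.succ).det := by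
  set D : Matrix (Fin (m + 1)) (Fin (m + 1)) R :=
    of fun i => Fin.cases (M 0) (fun p j => M p.succ j - M p.castSucc j) i
  have hMD : M.det = D.det :=
    det_eq_of_forall_row_eq_smul_add_pred (fun _ => 1) (fun _ => rfl) (fun i j => by simp [D])
  rw [hMD, det_succ_column_zero, Fin.sum_univ_succ]
  simp [D, hM]
  rfl

theorem det_eval_eq_prod_coeff_mul_det_vandermonde {n : ℕ} (v : Fin n → R) (P : Fin n → R[X])
    (hP : ∀ i, (P i).natDegree ≤ i) :
    (of fun i j => (P j).eval (v i)).det = (∏ i, (P i).coeff i) * (vandermonde v).det := by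
  rw [eval_matrixOfPolynomials_eq_vandermonde_mul_matrixOfPolynomials v P hP, det_mul, mul_comm,
    det_of_isUpperTriangular]
  · rfl
  · intro i j hij
    exact coeff_eq_zero_of_natDegree_lt ((hP j).trans_lt hij)

theorem det_eval_succ_sub_eval {m : ℕ} (P : ℕ → R[X]) (hP : ∀ q, (P q).natDegree ≤ q + 1)
    (t : Fin (m + 1) → R) :
    (of fun p q : Fin m => (P q).eval (t p.succ) - (P q).eval (t p.castSucc)).det =
      (∏ q : Fin m, (P q).coeff (q + 1)) * ∏ i, ∏ j ∈ Ioi i, (t j - t i) := by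
  let Q : Fin (m + 1) → R[X] := Fin.cases 1 fun q => P q
  have hQ : ∀ i, (Q i).natDegree ≤ i := Fin.cases (by simp [Q]) fun q => by simpa [Q] using hP q
  have hcoeff : ∏ i, (Q i).coeff i = ∏ q : Fin m, (P q).coeff (q + 1) := by
    simp [Q, Fin.prod_univ_succ]
  rw [← det_vandermonde, ← hcoeff, ← det_eval_eq_prod_coeff_mul_det_vandermonde t Q hQ,
    det_eq_det_of_succ_row_sub _ fun i => by simp [Q]]
  rfl

theorem det_sum_smul_rows {ι α : Type*} [Fintype ι] [DecidableEq ι] [DecidableEq α]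
    (A : ι → Finset α) (w : ι → α → R) (v : α → ι → R) :
    (of fun i => ∑ x ∈ A i, w i x • v x).det =
      ∑ s ∈ Fintype.piFinset A, (∏ i, w i (s i)) * (of fun i => v (s i)).det := by
  let d : (ι → R) [⋀^ι]→ₗ[R] R := detRowAlternating
  refine (d.map_sum_finset (fun i x => w i x • v x) A).trans (sum_congr rfl fun s _ => ?_)
  exact d.map_smul_univ (fun i => w i (s i)) (fun i => v (s i))

end Determinants

theorem sum_Icc_endpoint_weight_mul {R : Type*} [Semiring R] (f : ℕ → R) {a b : ℕ}
    (hab : a < b) :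
    ∑ x ∈ Icc a b, (if x = a ∨ x = b then 1 else 2) * f x =
      ∑ x ∈ Ico a b, (f x + f (x + 1)) := by
  have hweight : ∀ x ∈ Icc a b, (if x = a ∨ x = b then (1 : R) else 2) * f x =
      (if x < b then f x else 0) + (if a < x then f x else 0) := by
    intro x hx
    rw [mem_Icc] at hx
    by_cases hxa : x = a
    · simp [hxa, hab]
    by_cases hxb : x = b
    · simp [hxb, hab]
    · simp [hxa, hxb, lt_of_le_of_ne hx.2 hxb, lt_of_le_of_ne hx.1 (Ne.symm hxa), two_mul]
  have hshift : ∑ x ∈ Ico a b, f (x + 1) = ∑ x ∈ Ioc a b, f x := by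
    rw [sum_Ico_add' f a b 1, Finset.Ico_add_one_add_one_eq_Ioc]
  rw [sum_congr rfl hweight, sum_add_distrib, sum_add_distrib, hshift, ← sum_filter,
    ← sum_filter]
  congr 1 <;> congr 1 <;> ext x <;> simp only [mem_filter, mem_Icc, mem_Ico, mem_Ioc] <;> omega

/-- By Faulhaber's formula, its forward difference at a natural number `x` is
`x ^ q + (x + 1) ^ q`. -/
noncomputable def endpointSumPoly (q : ℕ) : ℚ[X] :=
  C (2 / ((q : ℚ) + 1)) * Polynomial.bernoulli (q + 1) + X ^ q

theorem natDegree_endpointSumPoly_le (q : ℕ) : (endpointSumPoly q).natDegree ≤ q + 1 := by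
  refine natDegree_add_le_of_degree_le ((natDegree_C_mul_le _ _).trans ?_)
    ((natDegree_pow_le_of_le q natDegree_X_le).trans (by simp))
  refine natDegree_le_iff_coeff_eq_zero.mpr fun i hi => ?_
  rw [coeff_bernoulli, if_neg (by exact_mod_cast hi.not_ge)]

theorem coeff_endpointSumPoly (q : ℕ) : (endpointSumPoly q).coeff (q + 1) = 2 / (q + 1) := by
  simp [endpointSumPoly, coeff_bernoulli, coeff_X_pow]

theorem eval_endpointSumPoly (q y : ℕ) :
    (endpointSumPoly q).eval (y : ℚ) = 2 / (q + 1) * _root_.bernoulli (q + 1) + 0 ^ q +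
      ∑ x ∈ range y, ((x : ℚ) ^ q + (x + 1) ^ q) := by
  have hshift : ∑ x ∈ range y, ((x : ℚ) + 1) ^ q =
      ∑ x ∈ range y, (x : ℚ) ^ q + y ^ q - 0 ^ q := by
    have := sum_range_succ' (fun x => (x : ℚ) ^ q) y
    rw [sum_range_succ] at this
    push_cast at this
    linear_combination -this
  simp only [endpointSumPoly, eval_add, eval_mul, eval_C, eval_pow, eval_X, bernoulli_succ_eval,
    sum_add_distrib, hshift]
  field_simp
  ring

theorem eval_endpointSumPoly_sub {a b : ℕ} (q : ℕ) (hab : a ≤ b) :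
    (endpointSumPoly q).eval (b : ℚ) - (endpointSumPoly q).eval (a : ℚ) =
      ∑ x ∈ Ico a b, ((x : ℚ) ^ q + (x + 1) ^ q) := by
  rw [eval_endpointSumPoly, eval_endpointSumPoly, sum_Ico_eq_sub _ hab]
  ring

theorem prod_two_div_succ (m : ℕ) : ∏ q : Fin m, 2 / ((q : ℚ) + 1) = 2 ^ m / m.factorial := by
  rw [Fin.prod_univ_eq_prod_range (fun q => 2 / ((q : ℚ) + 1)), prod_div_distrib, prod_const,
    card_range, ← prod_range_add_one_eq_factorial]
  push_cast
  rfl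

def gapBox {m : ℕ} (t : Fin (m + 1) → ℕ) : Finset (Fin m → ℕ) :=
  Fintype.piFinset fun j => Icc (t j.castSucc) (t j.succ)

def gapWeight {m : ℕ} (t : Fin (m + 1) → ℕ) (s : Fin m → ℕ) : ℚ :=
  ∏ j, if s j = t j.castSucc ∨ s j = t j.succ then 1 else 2

theorem sum_gapWeight_mul_det_vandermonde {m : ℕ} (t : Fin (m + 1) → ℕ)
    (ht : ∀ j : Fin m, t j.castSucc < t j.succ) :
    ∑ s ∈ gapBox t, gapWeight t s * (vandermonde fun j => (s j : ℚ)).det =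
      2 ^ m / m.factorial * ∏ i, ∏ j ∈ Ioi i, ((t j : ℚ) - t i) := by
  have hrows :
      (of fun p => ∑ x ∈ Icc (t p.castSucc) (t p.succ),
        (if x = t p.castSucc ∨ x = t p.succ then (1 : ℚ) else 2) •
          fun q : Fin m => (x : ℚ) ^ (q : ℕ)) =
        of fun p q : Fin m => (endpointSumPoly q).eval (t p.succ : ℚ) -
          (endpointSumPoly q).eval (t p.castSucc : ℚ) := by
    ext p q
    simp only [of_apply, Finset.sum_apply, Pi.smul_apply, smul_eq_mul]
    rw [sum_Icc_endpoint_weight_mul (fun x : ℕ => (x : ℚ) ^ (q : ℕ)) (ht p),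
      eval_endpointSumPoly_sub _ (ht p).le]
    push_cast
    rfl
  rw [← prod_two_div_succ]
  refine (det_sum_smul_rows (fun j : Fin m => Icc (t j.castSucc) (t j.succ))
    (fun j x => if x = t j.castSucc ∨ x = t j.succ then (1 : ℚ) else 2)
    (fun (x : ℕ) (q : Fin m) => (x : ℚ) ^ (q : ℕ))).symm.trans ?_
  rw [hrows, det_eval_succ_sub_eval _ natDegree_endpointSumPoly_le fun i => (t i : ℚ)]
  simp [coeff_endpointSumPoly]

section Interlacing

variable {n : ℕ}

theorem card_filter_eq_card_filter_orderEmbOfFin {m : ℕ} (S : Finset (Fin n)) (h : #S = m)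
    (p : Fin n → Prop) [DecidablePred p] :
    #{x ∈ S | p x} = #{i : Fin m | p (S.orderEmbOfFin h i)} := by
  conv_lhs => rw [← S.map_orderEmbOfFin_univ h]
  rw [filter_map, card_map]
  rfl

def prefixCount (S : Finset (Fin n)) (k : ℕ) : ℕ := #{j ∈ S | j.val < k}

theorem lt_prefixCount_iff {m : ℕ} (S : Finset (Fin n)) (h : #S = m) (j : Fin m) (k : ℕ) :
    (j : ℕ) < prefixCount S k ↔ (S.orderEmbOfFin h j : ℕ) < k := by
  rw [prefixCount, card_filter_eq_card_filter_orderEmbOfFin S h]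
  constructor
  · intro hj
    by_contra! hk
    have hsub : ({i | (S.orderEmbOfFin h i : ℕ) < k} : Finset (Fin m)) ⊆ Iio j :=
      fun i hi => by
      rw [mem_filter] at hi
      exact mem_Iio.mpr ((S.orderEmbOfFin h).lt_iff_lt.mp (Fin.lt_def.mpr (by omega)))
    have := card_le_card hsub
    rw [Fin.card_Iio] at this
    omega
  · intro hjk
    have hsub : Iic j ⊆ ({i | (S.orderEmbOfFin h i : ℕ) < k} : Finset (Fin m)) :=
      fun i hi => by
      have := Fin.le_def.mp ((S.orderEmbOfFin h).le_iff_le.mpr (mem_Iic.mp hi))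
      exact mem_filter.mpr ⟨mem_univ _, by omega⟩
    have := card_le_card hsub
    rw [Fin.card_Iic] at this
    omega

/-- `S` and `T` are consecutive rows of a monotone triangle. -/
def Interlaces (S T : Finset (Fin n)) : Prop :=
  #T = #S + 1 ∧ ∀ k, prefixCount T k = prefixCount S k ∨ prefixCount T k = prefixCount S k + 1

theorem interlaces_iff_orderEmbOfFin {m : ℕ} {S T : Finset (Fin n)} (hS : #S = m)
    (hT : #T = m + 1) :
    Interlaces S T ↔ ∀ j : Fin m, T.orderEmbOfFin hT j.castSucc ≤ S.orderEmbOfFin hS j ∧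
      S.orderEmbOfFin hS j ≤ T.orderEmbOfFin hT j.succ := by
  have hsS := lt_prefixCount_iff S hS
  have htT := lt_prefixCount_iff T hT
  simp only [Interlaces, hS, hT, true_and, Fin.le_def]
  constructor
  · intro hk j
    constructor
    · by_contra! hlt
      have h1 := (hsS j ((S.orderEmbOfFin hS j : ℕ) + 1)).mpr (by omega)
      have h2 := mt (htT j.castSucc ((S.orderEmbOfFin hS j : ℕ) + 1)).mp (by omega)
      rw [Fin.val_castSucc] at h2
      rcases hk ((S.orderEmbOfFin hS j : ℕ) + 1) with h | h <;> omega
    · by_contra! hlt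
      have h1 := (htT j.succ ((T.orderEmbOfFin hT j.succ : ℕ) + 1)).mpr (by omega)
      have h2 := mt (hsS j ((T.orderEmbOfFin hT j.succ : ℕ) + 1)).mp (by omega)
      rw [Fin.val_succ] at h1
      rcases hk ((T.orderEmbOfFin hT j.succ : ℕ) + 1) with h | h <;> omega
  · intro hbox k
    have hle : prefixCount S k ≤ prefixCount T k := by
      by_contra! hlt
      have hj : prefixCount T k < m := by
        have : prefixCount S k ≤ m := hS ▸ card_filter_le S (fun j => j.val < k)
        omega
      have h1 := (hsS ⟨_, hj⟩ k).mp hlt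
      have h2 := mt (htT (Fin.castSucc ⟨_, hj⟩) k).mpr (by simp)
      have := (hbox ⟨_, hj⟩).1
      omega
    have hge : prefixCount T k ≤ prefixCount S k + 1 := by
      by_contra! hlt
      have hj : prefixCount S k < m := by
        have : prefixCount T k ≤ m + 1 := hT ▸ card_filter_le T (fun j => j.val < k)
        omega
      have h1 := (htT (Fin.succ ⟨_, hj⟩) k).mp (by simpa using hlt)
      have h2 := mt (hsS ⟨_, hj⟩ k).mpr (by simp)
      have := (hbox ⟨_, hj⟩).2
      omega
    omega

def finsetVandermonde (S : Finset (Fin n)) : ℚ :=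
  ∏ p ∈ S, ∏ q ∈ S with p < q, (((q : ℕ) : ℚ) - (p : ℕ))

theorem finsetVandermonde_eq_det {m : ℕ} (S : Finset (Fin n)) (h : #S = m) :
    finsetVandermonde S = (vandermonde fun i => ((S.orderEmbOfFin h i : ℕ) : ℚ)).det := by
  rw [det_vandermonde, finsetVandermonde]
  conv_lhs => rw [← S.map_orderEmbOfFin_univ h]
  rw [prod_map]
  refine prod_congr rfl fun i _ => ?_
  rw [filter_map, prod_map]
  refine prod_congr ?_ fun _ _ => rfl
  ext j
  simp [(S.orderEmbOfFin h).lt_iff_lt]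

theorem mem_iff_exists_orderEmbOfFin {m : ℕ} (S : Finset (Fin n)) (h : #S = m) (x : Fin n) :
    x ∈ S ↔ ∃ j, S.orderEmbOfFin h j = x := by
  rw [← mem_coe, ← S.range_orderEmbOfFin h, Set.mem_range]

theorem exists_orderEmbOfFin_eq_of_strictMono {m : ℕ} {s : Fin m → ℕ} (hs : StrictMono s)
    (hsn : ∀ j, s j < n) :
    ∃ h : #{x : Fin n | ∃ j, s j = x} = m,
      ∀ j, (({x : Fin n | ∃ j, s j = x} : Finset (Fin n)).orderEmbOfFin h j : ℕ) = s j := by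
  have himage : ({x : Fin n | ∃ j, s j = x} : Finset (Fin n)) =
      univ.image fun j => (⟨s j, hsn j⟩ : Fin n) := by
    ext x
    simp [Fin.ext_iff, eq_comm]
  have hinj : Function.Injective fun j => (⟨s j, hsn j⟩ : Fin n) :=
    fun a b hab => hs.injective (congrArg Fin.val hab)
  have hcard : #{x : Fin n | ∃ j, s j = x} = m := by
    rw [himage, card_image_of_injective _ hinj, card_univ, Fintype.card_fin]
  refine ⟨hcard, fun j => ?_⟩
  rw [← orderEmbOfFin_unique hcard (f := fun j => (⟨s j, hsn j⟩ : Fin n))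
    (fun j => by simp) (fun a b hab => Fin.lt_def.mpr (hs hab))]

theorem mem_iff_eq_or_eq_of_interlaces {m : ℕ} {S T : Finset (Fin n)} (hS : #S = m)
    (hT : #T = m + 1) (hST : Interlaces S T) (j : Fin m) :
    S.orderEmbOfFin hS j ∈ T ↔
      S.orderEmbOfFin hS j = T.orderEmbOfFin hT j.castSucc ∨
        S.orderEmbOfFin hS j = T.orderEmbOfFin hT j.succ := by
  refine ⟨fun hmem => ?_,
    fun h => h.elim (· ▸ orderEmbOfFin_mem _ _ _) (· ▸ orderEmbOfFin_mem _ _ _)⟩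
  obtain ⟨i, hi⟩ := (mem_iff_exists_orderEmbOfFin T hT _).mp hmem
  have hbox := (interlaces_iff_orderEmbOfFin hS hT).mp hST j
  rw [← hi, (T.orderEmbOfFin hT).le_iff_le, (T.orderEmbOfFin hT).le_iff_le] at hbox
  rw [← hi, (T.orderEmbOfFin hT).injective.eq_iff, (T.orderEmbOfFin hT).injective.eq_iff]
  simp only [Fin.le_def, Fin.ext_iff, Fin.val_castSucc, Fin.val_succ] at hbox ⊢
  omega

theorem two_pow_card_sdiff_eq_gapWeight {m : ℕ} {S T : Finset (Fin n)} (hS : #S = m)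
    (hT : #T = m + 1) (hST : Interlaces S T) :
    (2 : ℚ) ^ #(S \ T) =
      gapWeight (fun i => T.orderEmbOfFin hT i) (fun j => S.orderEmbOfFin hS j) := by
  simp_rw [gapWeight, ← Fin.ext_iff, ← mem_iff_eq_or_eq_of_interlaces hS hT hST]
  rw [prod_ite, prod_const_one, one_mul, prod_const, sdiff_eq_filter,
    card_filter_eq_card_filter_orderEmbOfFin S hS]

theorem strictMono_of_mem_gapBox_of_injective {m : ℕ} {t : Fin (m + 1) → ℕ} (ht : Monotone t)
    {s : Fin m → ℕ} (hs : s ∈ gapBox t) (hinj : Function.Injective s) : StrictMono s := by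
  have hs := Fintype.mem_piFinset.mp hs
  refine Monotone.strictMono_of_injective (fun a b hab => ?_) hinj
  rcases hab.eq_or_lt with rfl | hlt
  · rfl
  · calc s a ≤ t a.succ := (mem_Icc.mp (hs a)).2
      _ ≤ t b.castSucc := ht (Fin.le_def.mpr (by simpa using hlt))
      _ ≤ s b := (mem_Icc.mp (hs b)).1

theorem lt_of_mem_gapBox {m : ℕ} {T : Finset (Fin n)} (hT : #T = m + 1) {s : Fin m → ℕ}
    (hs : s ∈ gapBox fun i => T.orderEmbOfFin hT i) (j : Fin m) : s j < n :=
  (mem_Icc.mp (Fintype.mem_piFinset.mp hs j)).2.trans_lt (Fin.is_lt _)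

open scoped Classical in
/-- A row `S` interlacing `T` is recorded by its increasing enumeration, which lies in the box of
gaps of `T`; conversely every strictly increasing tuple in that box enumerates such a row. -/
theorem sum_interlaces_eq_sum_gapBox {m : ℕ} (T : Finset (Fin n)) (hT : #T = m + 1) :
    ∑ S with Interlaces S T, 2 ^ #(S \ T) * finsetVandermonde S =
      ∑ s ∈ gapBox (fun i => T.orderEmbOfFin hT i) with StrictMono s,
        gapWeight (fun i => T.orderEmbOfFin hT i) s * (vandermonde fun j => (s j : ℚ)).det := by
  have hcard : ∀ {S}, S ∈ ({S | Interlaces S T} : Finset _) → #S = m := fun hS => by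
    have := (mem_filter.mp hS).2.1
    omega
  refine sum_bij' (fun S hS j => (S.orderEmbOfFin (hcard hS) j : ℕ))
    (fun s _ => ({x | ∃ j, s j = x} : Finset (Fin n))) (fun S hS => ?_) (fun s hs => ?_)
    (fun S hS => ?_) (fun s hs => ?_) (fun S hS => ?_)
  · have hbox := (interlaces_iff_orderEmbOfFin (hcard hS) hT).mp (mem_filter.mp hS).2
    refine mem_filter.mpr ⟨Fintype.mem_piFinset.mpr fun j => mem_Icc.mpr ?_,
      fun a b hab => (S.orderEmbOfFin (hcard hS)).strictMono hab⟩
    exact ⟨Fin.le_def.mp (hbox j).1, Fin.le_def.mp (hbox j).2⟩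
  · obtain ⟨hs, hmono⟩ := mem_filter.mp hs
    obtain ⟨hc, he⟩ := exists_orderEmbOfFin_eq_of_strictMono hmono (lt_of_mem_gapBox hT hs)
    refine mem_filter.mpr ⟨mem_univ _, (interlaces_iff_orderEmbOfFin hc hT).mpr fun j => ?_⟩
    simp only [Fin.le_def, he]
    exact mem_Icc.mp (Fintype.mem_piFinset.mp hs j)
  · ext x
    simp [mem_iff_exists_orderEmbOfFin S (hcard hS) x, Fin.ext_iff]
  · obtain ⟨hs, hmono⟩ := mem_filter.mp hs
    exact funext (exists_orderEmbOfFin_eq_of_strictMono hmono (lt_of_mem_gapBox hT hs)).2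
  · rw [two_pow_card_sdiff_eq_gapWeight (hcard hS) hT (mem_filter.mp hS).2,
      finsetVandermonde_eq_det S (hcard hS)]

open scoped Classical in
theorem sum_interlaces_two_pow_mul_finsetVandermonde {m : ℕ} (T : Finset (Fin n))
    (hT : #T = m + 1) :
    ∑ S with Interlaces S T, 2 ^ #(S \ T) * finsetVandermonde S =
      2 ^ m / m.factorial * finsetVandermonde T := by
  have ht : StrictMono fun i => (T.orderEmbOfFin hT i : ℕ) :=
    fun a b hab => (T.orderEmbOfFin hT).strictMono hab
  -- a tuple of the box that is not strictly increasing repeats a value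
  have hvanish : ∀ s ∈ gapBox (fun i => T.orderEmbOfFin hT i),
      gapWeight (fun i => T.orderEmbOfFin hT i) s * (vandermonde fun j => (s j : ℚ)).det ≠ 0 →
        StrictMono s :=
    fun s hs hne => strictMono_of_mem_gapBox_of_injective ht.monotone hs
      fun a b hab => det_vandermonde_ne_zero_iff.mp (right_ne_zero_of_mul hne) (by simp [hab])
  rw [finsetVandermonde_eq_det T hT, det_vandermonde,
    ← sum_gapWeight_mul_det_vandermonde _ fun _ => ht Fin.castSucc_lt_succ,
    ← sum_filter_of_ne hvanish, sum_interlaces_eq_sum_gapBox]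

open scoped Classical in
/-- Monotone triangles with bottom row `T`, read from the top row `C 0 = ∅`. -/
noncomputable def interlacingChains (m : ℕ) (T : Finset (Fin n)) :
    Finset (Fin (m + 1) → Finset (Fin n)) :=
  {C | C 0 = ∅ ∧ C (Fin.last m) = T ∧ ∀ i : Fin m, Interlaces (C i.castSucc) (C i.succ)}

theorem mem_interlacingChains {m : ℕ} {T : Finset (Fin n)}
    {C : Fin (m + 1) → Finset (Fin n)} :
    C ∈ interlacingChains m T ↔
      C 0 = ∅ ∧ C (Fin.last m) = T ∧ ∀ i : Fin m, Interlaces (C i.castSucc) (C i.succ) := by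
  simp [interlacingChains]

def chainNegCount {m : ℕ} (C : Fin (m + 1) → Finset (Fin n)) : ℕ :=
  ∑ i : Fin m, #(C i.castSucc \ C i.succ)

theorem interlacingChains_zero : interlacingChains 0 (∅ : Finset (Fin n)) = {fun _ => ∅} := by
  ext C
  simp only [mem_interlacingChains, mem_singleton, IsEmpty.forall_iff, and_true]
  refine ⟨fun h => funext fun i => ?_, fun h => by simp [h]⟩
  rw [Fin.fin_one_eq_zero i, h.1]

theorem mem_interlacingChains_succ {m : ℕ} {T : Finset (Fin n)}
    {C : Fin (m + 2) → Finset (Fin n)} :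
    C ∈ interlacingChains (m + 1) T ↔ C (Fin.last (m + 1)) = T ∧
      Interlaces (C (Fin.last m).castSucc) T ∧
        Fin.init C ∈ interlacingChains m (C (Fin.last m).castSucc) := by
  simp only [interlacingChains, mem_filter, mem_univ, true_and, Fin.forall_fin_succ',
    Fin.init, Fin.succ_last, Fin.castSucc_zero, ← Fin.succ_castSucc]
  constructor
  · rintro ⟨h0, rfl, hsteps, hlast⟩
    exact ⟨rfl, hlast, h0, hsteps⟩
  · rintro ⟨rfl, hlast, h0, hsteps⟩
    exact ⟨h0, rfl, hsteps, hlast⟩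

theorem chainNegCount_succ {m : ℕ} (C : Fin (m + 2) → Finset (Fin n)) :
    chainNegCount C =
      chainNegCount (Fin.init C) + #(C (Fin.last m).castSucc \ C (Fin.last (m + 1))) := by
  rw [chainNegCount, Fin.sum_univ_castSucc, Fin.succ_last]
  rfl

open scoped Classical in
theorem sum_interlacingChains_succ (m : ℕ) (T : Finset (Fin n)) :
    ∑ C ∈ interlacingChains (m + 1) T, (2 : ℚ) ^ chainNegCount C =
      ∑ S with Interlaces S T,
        2 ^ #(S \ T) * ∑ C ∈ interlacingChains m S, (2 : ℚ) ^ chainNegCount C := by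
  simp_rw [mul_sum]
  rw [sum_sigma']
  refine sum_nbij' (fun C => ⟨C (Fin.last m).castSucc, Fin.init C⟩) (fun x => Fin.snoc x.2 T)
    (fun C hC => ?_) (fun x hx => ?_) (fun C hC => ?_) (fun x hx => ?_) (fun C hC => ?_)
  · obtain ⟨-, hstep, hinit⟩ := mem_interlacingChains_succ.mp hC
    exact mem_sigma.mpr ⟨mem_filter.mpr ⟨mem_univ _, hstep⟩, hinit⟩
  · obtain ⟨hS, hC⟩ := mem_sigma.mp hx
    have hlast := (mem_interlacingChains.mp hC).2.1
    refine mem_interlacingChains_succ.mpr ⟨Fin.snoc_last _ _, ?_, ?_⟩ <;>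
      simp only [Fin.snoc_castSucc, Fin.init_snoc, hlast]
    exacts [(mem_filter.mp hS).2, hC]
  · rw [← (mem_interlacingChains_succ.mp hC).1, Fin.snoc_init_self]
  · have hlast := (mem_interlacingChains.mp (mem_sigma.mp hx).2).2.1
    simp only [Fin.snoc_castSucc, Fin.init_snoc, hlast]
  · rw [chainNegCount_succ, pow_add, mul_comm, (mem_interlacingChains_succ.mp hC).1]

theorem sum_interlacingChains_eq (m : ℕ) (T : Finset (Fin n)) (hT : #T = m) :
    ∑ C ∈ interlacingChains m T, (2 : ℚ) ^ chainNegCount C =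
      (∏ j ∈ range m, (2 : ℚ) ^ j / j.factorial) * finsetVandermonde T := by
  classical
  induction m generalizing T with
  | zero =>
    rw [card_eq_zero.mp hT, interlacingChains_zero]
    simp [chainNegCount, finsetVandermonde]
  | succ m ih =>
    have hstep : ∀ S ∈ ({S | Interlaces S T} : Finset _),
        2 ^ #(S \ T) * ∑ C ∈ interlacingChains m S, (2 : ℚ) ^ chainNegCount C =
          (∏ j ∈ range m, (2 : ℚ) ^ j / j.factorial) * (2 ^ #(S \ T) * finsetVandermonde S) :=
      fun S hS => by
        have := (mem_filter.mp hS).2.1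
        rw [ih S (by omega)]
        ring
    rw [sum_interlacingChains_succ, sum_congr rfl hstep, ← mul_sum,
      sum_interlaces_two_pow_mul_finsetVandermonde T hT, prod_range_succ]
    ring

theorem finsetVandermonde_univ : finsetVandermonde (univ : Finset (Fin n)) =
    ∏ j ∈ range n, (j.factorial : ℚ) := by
  have hid : ⇑((univ : Finset (Fin n)).orderEmbOfFin (card_fin n)) = id :=
    (orderEmbOfFin_unique _ (fun _ => mem_univ _) strictMono_id).symm
  simp only [finsetVandermonde_eq_det _ (card_fin n), hid, id]
  cases n with
  | zero => simp
  | succ n =>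
    rw [det_vandermonde_id_eq_superFactorial, ← Nat.prod_range_succ_factorial]
    push_cast
    rfl

end Interlacing

theorem prod_two_pow_div_factorial_mul_prod_factorial (n : ℕ) :
    (∏ j ∈ range n, (2 : ℚ) ^ j / j.factorial) * ∏ j ∈ range n, (j.factorial : ℚ) =
      2 ^ (n * (n - 1) / 2) := by
  rw [← prod_mul_distrib, ← sum_range_id, ← prod_pow_eq_pow_sum]
  exact prod_congr rfl fun j _ => div_mul_cancel₀ _ (by positivity)

section AlternatingSignMatrices

variable {n : ℕ}

theorem filter_le_eq_filter_val_lt_succ (k : Fin n) :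
    univ.filter (· ≤ k) = ({j | j.val < k.val + 1} : Finset (Fin n)) := by
  ext j
  simp only [mem_filter, mem_univ, true_and, Fin.le_def]
  omega

theorem filter_val_lt_of_le {k : ℕ} (hk : n ≤ k) : ({j | j.val < k} : Finset (Fin n)) = univ :=
  filter_true_of_mem fun j _ => j.is_lt.trans_le hk

theorem sum_val_lt_eq_zero_or_one {v : Fin n → ℤ} (hsum : ∑ j, v j = 1)
    (hprefix : ∀ k,
      ∑ j ∈ univ.filter (· ≤ k), v j = 0 ∨ ∑ j ∈ univ.filter (· ≤ k), v j = 1)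
    (k : ℕ) : ∑ j with j.val < k, v j = 0 ∨ ∑ j with j.val < k, v j = 1 := by
  rcases k with _ | k
  · simp
  · by_cases hk : k < n
    · simpa [filter_le_eq_filter_val_lt_succ] using hprefix ⟨k, hk⟩
    · rw [filter_val_lt_of_le (by omega)]
      exact Or.inr hsum

theorem sum_val_lt_indicator (S : Finset (Fin n)) (k : ℕ) :
    ∑ j with j.val < k, (if j ∈ S then 1 else 0 : ℤ) = prefixCount S k := by
  rw [sum_boole, filter_filter, prefixCount]
  congr 2
  ext j
  simp [and_comm]

theorem prefixCount_of_le (S : Finset (Fin n)) {k : ℕ} (hk : n ≤ k) : prefixCount S k = #S := by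
  rw [prefixCount, filter_true_of_mem fun j _ => j.is_lt.trans_le hk]

def colPrefixSum (A : Matrix (Fin n) (Fin n) ℤ) (u : ℕ) (j : Fin n) : ℤ :=
  ∑ i with i.val < u, A i j

theorem colPrefixSum_zero (A : Matrix (Fin n) (Fin n) ℤ) (j : Fin n) :
    colPrefixSum A 0 j = 0 := by
  simp [colPrefixSum]

theorem colPrefixSum_succ (A : Matrix (Fin n) (Fin n) ℤ) (i j : Fin n) :
    colPrefixSum A (i + 1) j = colPrefixSum A i j + A i j := by
  have : ({l | l.val < i.val + 1} : Finset (Fin n)) =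
      insert i ({l | l.val < i.val} : Finset _) := by
    ext l
    simp only [mem_filter, mem_univ, true_and, mem_insert, Fin.ext_iff]
    omega
  rw [colPrefixSum, colPrefixSum, this, sum_insert (by simp), add_comm]

theorem colPrefixSum_of_le (A : Matrix (Fin n) (Fin n) ℤ) {u : ℕ} (hu : n ≤ u) (j : Fin n) :
    colPrefixSum A u j = ∑ i, A i j := by
  rw [colPrefixSum, filter_val_lt_of_le hu]

def matrixOfChain (C : Fin (n + 1) → Finset (Fin n)) : Matrix (Fin n) (Fin n) ℤ :=
  of fun i j => (if j ∈ C i.succ then 1 else 0) - (if j ∈ C i.castSucc then 1 else 0)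

def chainOfMatrix (A : Matrix (Fin n) (Fin n) ℤ) : Fin (n + 1) → Finset (Fin n) :=
  fun u => {j | colPrefixSum A u j = 1}

theorem mem_chainOfMatrix {A : Matrix (Fin n) (Fin n) ℤ} {u : Fin (n + 1)} {j : Fin n} :
    j ∈ chainOfMatrix A u ↔ colPrefixSum A u j = 1 := by
  simp [chainOfMatrix]

theorem colPrefixSum_matrixOfChain (C : Fin (n + 1) → Finset (Fin n)) (u : Fin (n + 1))
    (j : Fin n) :
    colPrefixSum (matrixOfChain C) u j =
      (if j ∈ C u then 1 else 0) - (if j ∈ C 0 then 1 else 0) := by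
  induction u using Fin.induction with
  | zero => simp [colPrefixSum_zero]
  | succ i ih =>
    rw [Fin.val_castSucc] at ih
    rw [Fin.val_succ, colPrefixSum_succ, ih]
    simp only [matrixOfChain, of_apply]
    ring

theorem rowPrefixSum_matrixOfChain (C : Fin (n + 1) → Finset (Fin n)) (i : Fin n) (k : ℕ) :
    ∑ j with j.val < k, matrixOfChain C i j =
      (prefixCount (C i.succ) k : ℤ) - prefixCount (C i.castSucc) k := by
  simp only [matrixOfChain, of_apply, sum_sub_distrib, sum_val_lt_indicator]

theorem isASM_matrixOfChain {C : Fin (n + 1) → Finset (Fin n)}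
    (hC : C ∈ interlacingChains n univ) : IsASM (matrixOfChain C) := by
  obtain ⟨h0, hlast, hsteps⟩ := mem_interlacingChains.mp hC
  have hrow : ∀ i k, ∑ j with j.val < k, matrixOfChain C i j = 0 ∨
      ∑ j with j.val < k, matrixOfChain C i j = 1 := fun i k => by
    rw [rowPrefixSum_matrixOfChain]
    rcases (hsteps i).2 k with h | h <;> simp [h]
  have hcol : ∀ (u : Fin (n + 1)) j, colPrefixSum (matrixOfChain C) u j =
      if j ∈ C u then 1 else 0 := fun u j => by
    simp [colPrefixSum_matrixOfChain, h0]
  refine ⟨fun i j => ?_, fun i => ?_, fun j => ?_, fun i k => ?_, fun j k => ?_⟩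
  · simp only [matrixOfChain, of_apply]
    split_ifs <;> simp
  · rw [← filter_val_lt_of_le le_rfl, rowPrefixSum_matrixOfChain, prefixCount_of_le _ le_rfl,
      prefixCount_of_le _ le_rfl, (hsteps i).1]
    push_cast
    ring
  · have := hcol (Fin.last n) j
    rwa [Fin.val_last, colPrefixSum_of_le _ le_rfl, hlast, if_pos (mem_univ _)] at this
  · rw [filter_le_eq_filter_val_lt_succ]
    exact hrow i (k + 1)
  · rw [filter_le_eq_filter_val_lt_succ]
    have := hcol k.succ j
    rw [Fin.val_succ] at this
    rw [← colPrefixSum, this]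
    split_ifs <;> simp

theorem chainOfMatrix_matrixOfChain {C : Fin (n + 1) → Finset (Fin n)}
    (hC : C ∈ interlacingChains n univ) : chainOfMatrix (matrixOfChain C) = C := by
  funext u
  ext j
  by_cases hj : j ∈ C u <;>
    simp [mem_chainOfMatrix, colPrefixSum_matrixOfChain, (mem_interlacingChains.mp hC).1, hj]

theorem negCount_matrixOfChain (C : Fin (n + 1) → Finset (Fin n)) :
    negCount (matrixOfChain C) = chainNegCount C := by
  have hrow : ∀ i, ({j | matrixOfChain C i j = -1} : Finset (Fin n)) = C i.castSucc \ C i.succ :=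
    fun i => by
      ext j
      rw [mem_filter, mem_sdiff]
      simp only [matrixOfChain, of_apply]
      split_ifs <;> simp_all
  rw [negCount, card_filter, Fintype.sum_prod_type, chainNegCount]
  exact sum_congr rfl fun i _ => by rw [← hrow, card_filter]

theorem IsASM.rowPrefixSum_eq_zero_or_one {A : Matrix (Fin n) (Fin n) ℤ} (hA : IsASM A)
    (i : Fin n) (k : ℕ) :
    ∑ j with j.val < k, A i j = 0 ∨ ∑ j with j.val < k, A i j = 1 :=
  sum_val_lt_eq_zero_or_one (hA.2.1 i) (hA.2.2.2.1 i) k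

theorem IsASM.indicator_chainOfMatrix {A : Matrix (Fin n) (Fin n) ℤ} (hA : IsASM A)
    (u : Fin (n + 1)) (j : Fin n) :
    (if j ∈ chainOfMatrix A u then 1 else 0 : ℤ) = colPrefixSum A u j := by
  rcases sum_val_lt_eq_zero_or_one (hA.2.2.1 j) (hA.2.2.2.2 j) u with h | h
  · rw [if_neg (by rw [mem_chainOfMatrix, colPrefixSum, h]; norm_num)]
    exact h.symm
  · rw [if_pos (mem_chainOfMatrix.mpr h)]
    exact h.symm

theorem IsASM.matrixOfChain_chainOfMatrix {A : Matrix (Fin n) (Fin n) ℤ} (hA : IsASM A) :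
    matrixOfChain (chainOfMatrix A) = A := by
  ext i j
  simp only [matrixOfChain, of_apply, hA.indicator_chainOfMatrix, Fin.val_succ, Fin.val_castSucc,
    colPrefixSum_succ]
  ring

theorem IsASM.prefixCount_chainOfMatrix_succ {A : Matrix (Fin n) (Fin n) ℤ} (hA : IsASM A)
    (i : Fin n) (k : ℕ) :
    (prefixCount (chainOfMatrix A i.succ) k : ℤ) =
      prefixCount (chainOfMatrix A i.castSucc) k + ∑ j with j.val < k, A i j := by
  rw [← sum_val_lt_indicator, ← sum_val_lt_indicator, ← sum_add_distrib]
  refine sum_congr rfl fun j _ => ?_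
  rw [hA.indicator_chainOfMatrix, hA.indicator_chainOfMatrix, Fin.val_succ, Fin.val_castSucc,
    colPrefixSum_succ]

theorem IsASM.chainOfMatrix_mem {A : Matrix (Fin n) (Fin n) ℤ} (hA : IsASM A) :
    chainOfMatrix A ∈ interlacingChains n univ := by
  refine mem_interlacingChains.mpr ⟨?_, ?_, fun i => ⟨?_, fun k => ?_⟩⟩
  · ext j
    simp [mem_chainOfMatrix, colPrefixSum_zero]
  · ext j
    simp [mem_chainOfMatrix, colPrefixSum_of_le, hA.2.2.1 j]
  · have h := hA.prefixCount_chainOfMatrix_succ i n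
    rw [filter_val_lt_of_le le_rfl, hA.2.1 i, prefixCount_of_le _ le_rfl,
      prefixCount_of_le _ le_rfl] at h
    omega
  · have h := hA.prefixCount_chainOfMatrix_succ i k
    rcases hA.rowPrefixSum_eq_zero_or_one i k with h' | h' <;> rw [h'] at h <;> omega

theorem injOn_matrixOfChain :
    Set.InjOn matrixOfChain
      (interlacingChains n (univ : Finset (Fin n)) : Set (Fin (n + 1) → Finset (Fin n))) :=
  fun C hC C' hC' h => by
    rw [← chainOfMatrix_matrixOfChain hC, h, chainOfMatrix_matrixOfChain hC']

end AlternatingSignMatrices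

theorem two_enumeration_of_ASMs_general (n : ℕ) :
    ∃ s : Finset (Matrix (Fin n) (Fin n) ℤ),
      (∀ A, A ∈ s ↔ IsASM A) ∧
      ∑ A ∈ s, 2 ^ negCount A = 2 ^ (n * (n - 1) / 2) := by
  refine ⟨(interlacingChains n univ).image matrixOfChain, fun A => ⟨?_, fun hA => ?_⟩, ?_⟩
  · rintro hA
    obtain ⟨C, hC, rfl⟩ := mem_image.mp hA
    exact isASM_matrixOfChain hC
  · exact mem_image.mpr ⟨chainOfMatrix A, hA.chainOfMatrix_mem, hA.matrixOfChain_chainOfMatrix⟩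
  · have hsum := sum_interlacingChains_eq n (univ : Finset (Fin n)) (card_fin n)
    rw [finsetVandermonde_univ, prod_two_pow_div_factorial_mul_prod_factorial] at hsum
    rw [sum_image injOn_matrixOfChain]
    simp_rw [negCount_matrixOfChain]
    exact_mod_cast hsum

theorem two_enumeration_of_ASMs (n : ℕ) (hn : 1 ≤ n) :
    ∃ s : Finset (Matrix (Fin n) (Fin n) ℤ),
      (∀ A, A ∈ s ↔ IsASM A) ∧
      ∑ A ∈ s, 2 ^ negCount A = 2 ^ (n * (n - 1) / 2) :=
  two_enumeration_of_ASMs_general n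
end
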